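/- arXiv:2205.08238 — 2 statements merged into one kernel-verified Lean document; each statement's English description precedes it below -/
import Mathlib

section
/- Let X be a compact Hausdorff space and n a nonnegative integer. Then X admits a fine directed family of canonical covers each of order at most n+1 if and only if X admits a fine directed family of almost canonical covers each of order at most n+1. (Equivalently, the cofinal dimension condition Δ(X) ≤ n is unchanged if 'canonical cover' is replaced by 'almost canonical cover' throughout its definition.) -/
universe u

/-- A collection of subsets of a topological space is locally finite. -/
def LocallyFiniteColl {X : Type u} [TopologicalSpace X] (𝒞 : Set (Set X)) : Prop :=
  ∀ x : X, ∃ V ∈ nhds x, {F ∈ 𝒞 | (F ∩ V).Nonempty}.Finite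

/-- A canonical cover (as a collection of sets): a locally finite closed cover whose
members are the closures of a pairwise disjoint assignment of nonempty open sets. -/
def IsCanonicalCoverColl {X : Type u} [TopologicalSpace X] (𝒞 : Set (Set X)) : Prop :=
  (∀ F ∈ 𝒞, IsClosed F) ∧
  ⋃₀ 𝒞 = Set.univ ∧
  LocallyFiniteColl 𝒞 ∧
  ∃ u : Set X → Set X,
    (∀ F ∈ 𝒞, IsOpen (u F) ∧ (u F).Nonempty ∧ F = closure (u F)) ∧
    (∀ F ∈ 𝒞, ∀ G ∈ 𝒞, F ≠ G → u F ∩ u G = ∅)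

/-- An almost canonical cover (as a collection of sets). -/
def IsAlmostCanonicalCoverColl {X : Type u} [TopologicalSpace X] (𝒞 : Set (Set X)) : Prop :=
  (∀ F ∈ 𝒞, IsClosed F) ∧
  ⋃₀ 𝒞 = Set.univ ∧
  LocallyFiniteColl 𝒞 ∧
  (∀ F ∈ 𝒞, (interior F).Nonempty) ∧
  (∀ F ∈ 𝒞, ∀ G ∈ 𝒞, F ≠ G → interior F ∩ interior G = ∅) ∧
  (∀ V : Set X, IsOpen V → V.Nonempty → ∃ F ∈ 𝒞, (V ∩ interior F).Nonempty)

/-- `U` refines `V`: every member of `U` is contained in some member of `V`. -/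
def CoverRefines {X : Type u} (U V : Set (Set X)) : Prop :=
  ∀ A ∈ U, ∃ B ∈ V, A ⊆ B

/-- The order of a collection of sets is at most `n`. -/
def CoverOrderLE {X : Type u} (U : Set (Set X)) (n : ℕ) : Prop :=
  ∀ (x : X) (s : Finset (Set X)), (s : Set (Set X)) ⊆ U → (∀ B ∈ s, x ∈ B) → s.card ≤ n

/-
A canonical cover is almost canonical: its members are regular closed, so their interiors are the
interiors of the closures of the disjoint open sets, hence still disjoint. Conversely, replacing
every member `F` of an almost canonical cover by its regular closed part `closure (interior F)`
gives a canonical cover: the new members are closures of the disjoint open sets `interior F`, they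
still cover because the union of the interiors is dense and a locally finite union of closed sets
is closed, and since they shrink the old members, local finiteness, refinement of open covers and
order bounds all survive.
-/

open Set

section Shrinking

variable {X : Type u} {𝒜 ℬ : Set (Set X)} {f : Set X → Set X}

lemma CoverRefines.image_of_subset (h : CoverRefines 𝒜 ℬ) (hf : ∀ F ∈ 𝒜, f F ⊆ F) :
    CoverRefines (f '' 𝒜) ℬ := by
  rintro _ ⟨F, hF, rfl⟩
  obtain ⟨B, hB, hFB⟩ := h F hF
  exact ⟨B, hB, (hf F hF).trans hFB⟩

lemma CoverRefines.image_of_monotone (h : CoverRefines 𝒜 ℬ) (hf : Monotone f) :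
    CoverRefines (f '' 𝒜) (f '' ℬ) := by
  rintro _ ⟨F, hF, rfl⟩
  obtain ⟨B, hB, hFB⟩ := h F hF
  exact ⟨f B, mem_image_of_mem f hB, hf hFB⟩

lemma CoverOrderLE.image_of_subset {n : ℕ} (h : CoverOrderLE 𝒜 n) (hf : ∀ F ∈ 𝒜, f F ⊆ F) :
    CoverOrderLE (f '' 𝒜) n := by
  classical
  intro x s hs hx
  obtain ⟨t, ht𝒜, rfl⟩ := Finset.subset_set_image_iff.1 hs
  have hxt : ∀ F ∈ t, x ∈ F := fun F hF =>
    hf F (ht𝒜 hF) (hx (f F) (Finset.mem_image_of_mem f hF))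
  exact Finset.card_image_le.trans (h x t ht𝒜 hxt)

end Shrinking

section Topology

variable {X : Type u} [TopologicalSpace X] {𝒞 : Set (Set X)}

lemma Disjoint.interior_closure {U V : Set X} (hd : Disjoint U V) (hV : IsOpen V) :
    Disjoint (interior (closure U)) (interior (closure V)) := by
  have hUV : Disjoint (interior (closure U)) V :=
    (hd.closure_left hV).mono_left interior_subset
  exact (hUV.closure_right isOpen_interior).mono_right interior_subset

lemma LocallyFiniteColl.locallyFinite (h : LocallyFiniteColl 𝒞) :
    LocallyFinite ((↑) : 𝒞 → Set X) := fun x => by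
  obtain ⟨V, hV, hfin⟩ := h x
  exact ⟨V, hV, (hfin.preimage Subtype.val_injective.injOn).subset fun F hF => ⟨F.2, hF⟩⟩

lemma LocallyFiniteColl.image_of_subset {f : Set X → Set X} (h : LocallyFiniteColl 𝒞)
    (hf : ∀ F ∈ 𝒞, f F ⊆ F) : LocallyFiniteColl (f '' 𝒞) := fun x => by
  obtain ⟨V, hV, hfin⟩ := h x
  refine ⟨V, hV, (hfin.image f).subset ?_⟩
  rintro _ ⟨⟨F, hF, rfl⟩, hFV⟩
  exact ⟨F, ⟨hF, hFV.mono (inter_subset_inter_left V (hf F hF))⟩, rfl⟩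

lemma IsCanonicalCoverColl.isAlmostCanonicalCoverColl (h : IsCanonicalCoverColl 𝒞) :
    IsAlmostCanonicalCoverColl 𝒞 := by
  obtain ⟨hclosed, hcover, hlf, u, hu, hdisj⟩ := h
  have hu_sub : ∀ F ∈ 𝒞, u F ⊆ interior F := fun F hF =>
    (hu F hF).1.subset_interior_iff.2 (subset_closure.trans_eq (hu F hF).2.2.symm)
  refine ⟨hclosed, hcover, hlf, fun F hF => (hu F hF).2.1.mono (hu_sub F hF), ?_, ?_⟩
  · intro F hF G hG hne
    rw [(hu F hF).2.2, (hu G hG).2.2, ← disjoint_iff_inter_eq_empty]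
    exact (disjoint_iff_inter_eq_empty.2 (hdisj F hF G hG hne)).interior_closure (hu G hG).1
  · rintro V hV ⟨x, hxV⟩
    obtain ⟨F, hF, hxF⟩ := hcover ▸ mem_univ x
    rw [(hu F hF).2.2] at hxF
    obtain ⟨y, hyV, hyu⟩ := mem_closure_iff.1 hxF V hV hxV
    exact ⟨F, hF, y, hyV, hu_sub F hF hyu⟩

lemma sUnion_image_closure_interior_eq_univ (hlf : LocallyFiniteColl 𝒞)
    (hdense : ∀ V : Set X, IsOpen V → V.Nonempty → ∃ F ∈ 𝒞, (V ∩ interior F).Nonempty) :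
    ⋃₀ ((fun F => closure (interior F)) '' 𝒞) = univ := by
  have hdense' : Dense (⋃ F : 𝒞, interior (F : Set X)) := by
    refine dense_iff_inter_open.2 fun V hV hne => ?_
    obtain ⟨F, hF, y, hyV, hyF⟩ := hdense V hV hne
    exact ⟨y, hyV, mem_iUnion.2 ⟨⟨F, hF⟩, hyF⟩⟩
  rw [sUnion_image, eq_univ_iff_forall]
  intro x
  have hx := hdense'.closure_eq ▸ mem_univ x
  rw [(hlf.locallyFinite.subset fun _ => interior_subset).closure_iUnion] at hx
  obtain ⟨F, hxF⟩ := mem_iUnion.1 hx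
  exact mem_biUnion F.2 hxF

lemma IsAlmostCanonicalCoverColl.isCanonicalCoverColl_image_closure_interior
    (h : IsAlmostCanonicalCoverColl 𝒞) :
    IsCanonicalCoverColl ((fun F => closure (interior F)) '' 𝒞) := by
  obtain ⟨hclosed, -, hlf, hint, hdisj, hdense⟩ := h
  refine ⟨?_, sUnion_image_closure_interior_eq_univ hlf hdense,
    hlf.image_of_subset fun F hF => (hclosed F hF).closure_interior_subset, interior, ?_, ?_⟩
  · rintro _ ⟨F, -, rfl⟩
    exact isClosed_closure
  · rintro _ ⟨F, hF, rfl⟩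
    exact ⟨isOpen_interior, (hint F hF).mono isOpen_interior.subset_interior_closure,
      closure_interior_idem.symm⟩
  · rintro _ ⟨F, hF, rfl⟩ _ ⟨G, hG, rfl⟩ hne
    have hFG : F ≠ G := by rintro rfl; exact hne rfl
    rw [← disjoint_iff_inter_eq_empty]
    exact (disjoint_iff_inter_eq_empty.2 (hdisj F hF G hG hFG)).interior_closure isOpen_interior

end Topology

theorem cofinalDimension_almostCanonical_iff_general {X : Type u} [TopologicalSpace X] (n : ℕ) :
    (∃ (Λ : Type) (_ : Preorder Λ) (𝒞 : Λ → Set (Set X)),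
        Nonempty Λ ∧
        (∀ a b : Λ, ∃ c : Λ, a ≤ c ∧ b ≤ c) ∧
        (∀ a, IsCanonicalCoverColl (𝒞 a)) ∧
        (∀ a b : Λ, a ≤ b → CoverRefines (𝒞 b) (𝒞 a)) ∧
        (∀ 𝒰 : Set (Set X), (∀ U ∈ 𝒰, IsOpen U) → ⋃₀ 𝒰 = Set.univ →
          ∃ a, CoverRefines (𝒞 a) 𝒰) ∧
        (∀ a, CoverOrderLE (𝒞 a) (n + 1))) ↔
    (∃ (Λ : Type) (_ : Preorder Λ) (𝒞 : Λ → Set (Set X)),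
        Nonempty Λ ∧
        (∀ a b : Λ, ∃ c : Λ, a ≤ c ∧ b ≤ c) ∧
        (∀ a, IsAlmostCanonicalCoverColl (𝒞 a)) ∧
        (∀ a b : Λ, a ≤ b → CoverRefines (𝒞 b) (𝒞 a)) ∧
        (∀ 𝒰 : Set (Set X), (∀ U ∈ 𝒰, IsOpen U) → ⋃₀ 𝒰 = Set.univ →
          ∃ a, CoverRefines (𝒞 a) 𝒰) ∧
        (∀ a, CoverOrderLE (𝒞 a) (n + 1))) := by
  constructor
  · rintro ⟨Λ, _, 𝒞, hne, hdir, hcan, href, hfine, hord⟩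
    exact ⟨Λ, _, 𝒞, hne, hdir, fun a => (hcan a).isAlmostCanonicalCoverColl, href, hfine, hord⟩
  · rintro ⟨Λ, _, 𝒞, hne, hdir, hacan, href, hfine, hord⟩
    have hshrink : ∀ a, ∀ F ∈ 𝒞 a, closure (interior F) ⊆ F := fun a F hF =>
      ((hacan a).1 F hF).closure_interior_subset
    refine ⟨Λ, _, fun a => (fun F => closure (interior F)) '' 𝒞 a, hne, hdir,
      fun a => (hacan a).isCanonicalCoverColl_image_closure_interior,
      fun a b hab => (href a b hab).image_of_monotone fun _ _ h => closure_mono (interior_mono h),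
      fun 𝒰 hopen hcover => ?_, fun a => (hord a).image_of_subset (hshrink a)⟩
    obtain ⟨a, ha⟩ := hfine 𝒰 hopen hcover
    exact ⟨a, ha.image_of_subset (hshrink a)⟩

/-- For a compact Hausdorff space, admitting a fine directed family of canonical covers of
order at most `n+1` is equivalent to admitting a fine directed family of almost canonical
covers of order at most `n+1`; i.e. the condition `Δ(X) ≤ n` is unchanged when canonical
covers are replaced by almost canonical covers. -/
theorem cofinalDimension_almostCanonical_iff {X : Type u} [TopologicalSpace X]
    [CompactSpace X] [T2Space X] (n : ℕ) :
    (∃ (Λ : Type) (_ : Preorder Λ) (𝒞 : Λ → Set (Set X)),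
        Nonempty Λ ∧
        (∀ a b : Λ, ∃ c : Λ, a ≤ c ∧ b ≤ c) ∧
        (∀ a, IsCanonicalCoverColl (𝒞 a)) ∧
        (∀ a b : Λ, a ≤ b → CoverRefines (𝒞 b) (𝒞 a)) ∧
        (∀ 𝒰 : Set (Set X), (∀ U ∈ 𝒰, IsOpen U) → ⋃₀ 𝒰 = Set.univ →
          ∃ a, CoverRefines (𝒞 a) 𝒰) ∧
        (∀ a, CoverOrderLE (𝒞 a) (n + 1))) ↔
    (∃ (Λ : Type) (_ : Preorder Λ) (𝒞 : Λ → Set (Set X)),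
        Nonempty Λ ∧
        (∀ a b : Λ, ∃ c : Λ, a ≤ c ∧ b ≤ c) ∧
        (∀ a, IsAlmostCanonicalCoverColl (𝒞 a)) ∧
        (∀ a b : Λ, a ≤ b → CoverRefines (𝒞 b) (𝒞 a)) ∧
        (∀ 𝒰 : Set (Set X), (∀ U ∈ 𝒰, IsOpen U) → ⋃₀ 𝒰 = Set.univ →
          ∃ a, CoverRefines (𝒞 a) 𝒰) ∧
        (∀ a, CoverOrderLE (𝒞 a) (n + 1))) :=
  cofinalDimension_almostCanonical_iff_general n
end

section
/- Let f : X → Y be an irreducible perfect map between compact Hausdorff spaces, i.e. a continuous closed surjection with compact fibers such that f(A) ≠ Y for every proper closed subset A ⊆ X. If {A₁,…,Aₙ} is an almost canonical cover of X, then {f(A₁),…,f(Aₙ)} is an almost canonical cover of Y. -/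
/-!
Irreducibility says that for a nonempty open `U ⊆ X` the open set `(f '' Uᶜ)ᶜ`, the set of points
of `Y` whose whole fibre lies in `U`, is nonempty. Hence images of sets with nonempty interior have
nonempty interior, and for closed `B` the preimage of `interior (f '' B)` lies in `interior B`,
which transports disjointness of interiors from `X` to `Y`. Finiteness of the cover gives local
finiteness for free.
-/

universe u v

/-- An almost canonical cover of a topological space: a locally finite closed cover whose
members have nonempty pairwise disjoint interiors such that every nonempty open set meets
the interior of some member. -/
def IsAlmostCanonicalCover {X : Type u} [TopologicalSpace X] {ι : Type v}
    (F : ι → Set X) : Prop :=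
  (∀ i, IsClosed (F i)) ∧
  (⋃ i, F i) = Set.univ ∧
  LocallyFinite F ∧
  (∀ i, (interior (F i)).Nonempty) ∧
  (∀ i j : ι, i ≠ j → interior (F i) ∩ interior (F j) = ∅) ∧
  (∀ V : Set X, IsOpen V → V.Nonempty → ∃ i, (V ∩ interior (F i)).Nonempty)

open Set

section IrreducibleMap

variable {X Y : Type*} [TopologicalSpace X] {f : X → Y}

theorem nonempty_compl_image_compl_of_irreducible
    (hirr : ∀ A : Set X, IsClosed A → A ≠ univ → f '' A ≠ univ)
    {U : Set X} (hU : IsOpen U) (hne : U.Nonempty) : (f '' Uᶜ)ᶜ.Nonempty :=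
  nonempty_compl.2 (hirr _ hU.isClosed_compl (compl_ne_univ.2 hne))

variable [TopologicalSpace Y]

theorem nonempty_interior_image_of_irreducible (hsurj : Function.Surjective f)
    (hclosed : IsClosedMap f) (hirr : ∀ A : Set X, IsClosed A → A ≠ univ → f '' A ≠ univ)
    {S : Set X} (hS : (interior S).Nonempty) : (interior (f '' S)).Nonempty := by
  have hopen : IsOpen (f '' (interior S)ᶜ)ᶜ :=
    (hclosed _ isOpen_interior.isClosed_compl).isOpen_compl
  have hsub : (f '' (interior S)ᶜ)ᶜ ⊆ f '' S :=
    (compl_compl (interior S) ▸ subset_image_compl hsurj).trans (image_mono interior_subset)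
  exact (nonempty_compl_image_compl_of_irreducible hirr isOpen_interior hS).mono
    (interior_maximal hsub hopen)

theorem preimage_interior_image_subset_of_irreducible (hcont : Continuous f)
    (hsurj : Function.Surjective f)
    (hirr : ∀ A : Set X, IsClosed A → A ≠ univ → f '' A ≠ univ)
    {B : Set X} (hB : IsClosed B) : f ⁻¹' interior (f '' B) ⊆ B := by
  intro x hx
  by_contra hxB
  set U := f ⁻¹' interior (f '' B) ∩ Bᶜ
  have hU : IsOpen U := (isOpen_interior.preimage hcont).inter hB.isOpen_compl
  obtain ⟨y, hy⟩ := nonempty_compl_image_compl_of_irreducible hirr hU ⟨x, hx, hxB⟩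
  have hfibre : ∀ z, f z = y → z ∈ U := fun z hz => by_contra fun hzU => hy ⟨z, hzU, hz⟩
  obtain ⟨z, rfl⟩ := hsurj y
  obtain ⟨b, hb, hbz⟩ := interior_subset (hfibre z rfl).1
  exact (hfibre b hbz).2 hb

theorem preimage_interior_image_subset_interior_of_irreducible (hcont : Continuous f)
    (hsurj : Function.Surjective f)
    (hirr : ∀ A : Set X, IsClosed A → A ≠ univ → f '' A ≠ univ)
    {B : Set X} (hB : IsClosed B) : f ⁻¹' interior (f '' B) ⊆ interior B :=
  interior_maximal (preimage_interior_image_subset_of_irreducible hcont hsurj hirr hB)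
    (isOpen_interior.preimage hcont)

theorem IsAlmostCanonicalCover.image {ι : Type*} [Finite ι] {F : ι → Set X}
    (h : IsAlmostCanonicalCover F) (hcont : Continuous f) (hsurj : Function.Surjective f)
    (hclosed : IsClosedMap f) (hirr : ∀ A : Set X, IsClosed A → A ≠ univ → f '' A ≠ univ) :
    IsAlmostCanonicalCover (fun i => f '' F i) := by
  obtain ⟨hcl, hcov, -, hint, hdisj, hdense⟩ := h
  have hpre := fun i => preimage_interior_image_subset_interior_of_irreducible hcont hsurj hirr
    (hcl i)
  refine ⟨fun i => hclosed _ (hcl i), ?_, locallyFinite_of_finite _,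
    fun i => nonempty_interior_image_of_irreducible hsurj hclosed hirr (hint i), ?_, ?_⟩
  · rw [← image_iUnion, hcov, image_univ_of_surjective hsurj]
  · intro i j hij
    refine subset_empty_iff.1 ((hsurj.preimage_subset_preimage_iff).1 ?_)
    rw [preimage_inter, preimage_empty, ← hdisj i j hij]
    exact inter_subset_inter (hpre i) (hpre j)
  · intro V hV hVne
    have hV' : IsOpen (f ⁻¹' V) := hV.preimage hcont
    obtain ⟨k, hk⟩ := hdense _ hV' (hsurj.nonempty_preimage.2 hVne)
    have himage : f '' (f ⁻¹' V ∩ F k) ⊆ V ∩ f '' F k :=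
      (image_inter_subset _ _ _).trans (inter_subset_inter_left _ (image_preimage_subset _ _))
    have hS : (interior (f ⁻¹' V ∩ F k)).Nonempty := by rwa [interior_inter, hV'.interior_eq]
    refine ⟨k, (nonempty_interior_image_of_irreducible hsurj hclosed hirr hS).mono ?_⟩
    simpa only [interior_inter, hV.interior_eq] using interior_mono himage

end IrreducibleMap

theorem image_almostCanonicalCover_general {X : Type u} {Y : Type v}
    [TopologicalSpace X] [TopologicalSpace Y]
    (f : X → Y) (hcont : Continuous f) (hsurj : Function.Surjective f)
    (hclosed : IsClosedMap f)
    (hirr : ∀ A : Set X, IsClosed A → A ≠ Set.univ → f '' A ≠ Set.univ)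
    {n : ℕ} (A : Fin n → Set X) (h : IsAlmostCanonicalCover A) :
    IsAlmostCanonicalCover (fun i => f '' A i) :=
  h.image hcont hsurj hclosed hirr

/-- The image of an almost canonical cover under a perfect irreducible map between
compact Hausdorff spaces is an almost canonical cover. -/
theorem image_almostCanonicalCover {X : Type u} {Y : Type v}
    [TopologicalSpace X] [CompactSpace X] [T2Space X]
    [TopologicalSpace Y] [CompactSpace Y] [T2Space Y]
    (f : X → Y) (hcont : Continuous f) (hsurj : Function.Surjective f)
    (hclosed : IsClosedMap f) (hfib : ∀ y : Y, IsCompact (f ⁻¹' {y}))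
    (hirr : ∀ A : Set X, IsClosed A → A ≠ Set.univ → f '' A ≠ Set.univ)
    {n : ℕ} (A : Fin n → Set X) (h : IsAlmostCanonicalCover A) :
    IsAlmostCanonicalCover (fun i => f '' A i) :=
  image_almostCanonicalCover_general f hcont hsurj hclosed hirr A h
end
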